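/- The operation g : B^{2^{2^n}+1} → B is a near-unanimity operation: for all x, y ∈ B, g applied to any tuple all of whose coordinates equal x except at most one coordinate equal to y returns x. -/
import Mathlib


/- The universe `B = {a₁, a₂, 0, 1, ..., n}` of size `n+3` is encoded as
`Fin (n+3)`, where `a₁` is encoded as `0`, `a₂` as `1`, and the element
`i ∈ {0, ..., n}` as `i+2`. -/

/-- `L_r(x)`: the number of coordinates of `x` whose value is strictly less than the
element `r` in the order `a₁ < a₂ < 0 < 1 < ⋯ < n` (encoded: value `< r + 2`);
for `r = n+1` this counts all coordinates. -/
def Lb (n : ℕ) {K : ℕ} (x : Fin K → Fin (n + 3)) (r : ℕ) : ℕ :=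
  (Finset.univ.filter (fun q => (x q).val < r + 2)).card

/-- `F_x = {r ∈ {0, …, n} : L_{r+1}(x) > 2^(2^r) · L_r(x)}`. -/
def FsetB (n : ℕ) {K : ℕ} (x : Fin K → Fin (n + 3)) : Finset ℕ :=
  (Finset.range (n + 1)).filter (fun r => 2 ^ 2 ^ r * Lb n x r < Lb n x (r + 1))

/-- The operation `g : B^(2^(2^n)+1) → B`: `g(x) = max F_x` if `F_x ≠ ∅` (the element
`max F_x`, encoded as `max F_x + 2`); otherwise `g(x) = a₂` if the number of
coordinates equal to `a₂` exceeds the number equal to `a₁`, and `g(x) = a₁` else. -/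
def gop (n : ℕ) (x : Fin (2 ^ 2 ^ n + 1) → Fin (n + 3)) : Fin (n + 3) :=
  if h : (FsetB n x).Nonempty then
    ⟨(FsetB n x).max' h + 2, by
      have hmem := (FsetB n x).max'_mem h
      have h2 : (FsetB n x).max' h < n + 1 :=
        Finset.mem_range.mp (Finset.mem_filter.mp hmem).1
      omega⟩
  else if (Finset.univ.filter (fun q => x q = 1)).card >
      (Finset.univ.filter (fun q => x q = 0)).card then 1
  else 0

/-- The operation `g` is a near-unanimity operation: for all `x, y ∈ B`, `g` applied
to any tuple all of whose coordinates equal `x` except at most one coordinate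
(position `j`) equal to `y` returns `x`. -/
lemma card_filter_aux {m K : ℕ} (j : Fin K) (w : Fin K → Fin m) (x : Fin m)
    (hw : ∀ q, q ≠ j → w q = x) (p : Fin m → Prop) [DecidablePred p] :
    (Finset.univ.filter fun q => p (w q)).card
      = (if p (w j) then 1 else 0) + (if p x then K - 1 else 0) := by
  rw [Finset.card_filter]
  rw [← Finset.add_sum_erase _ _ (Finset.mem_univ j)]
  congr 1
  rw [Finset.sum_congr rfl (fun q hq => by rw [hw q (Finset.ne_of_mem_erase hq)])]
  rw [Finset.sum_const, Finset.card_erase_of_mem (Finset.mem_univ j),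
    Finset.card_univ, Fintype.card_fin, smul_eq_mul]
  split_ifs <;> simp

theorem stmt16 (n : ℕ) (x y : Fin (n + 3))
    (j : Fin (2 ^ 2 ^ n + 1)) (w : Fin (2 ^ 2 ^ n + 1) → Fin (n + 3))
    (hw : ∀ q, q ≠ j → w q = x) (hwj : w j = x ∨ w j = y) :
    gop n w = x := by
  clear hwj
  have hN : 2 ≤ 2 ^ 2 ^ n :=
    Nat.pow_le_pow_right (by norm_num : (0:ℕ) < 2) Nat.one_le_two_pow
  have hL : ∀ r : ℕ, Lb n w r
      = (if (w j).val < r + 2 then 1 else 0)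
        + (if x.val < r + 2 then 2 ^ 2 ^ n else 0) := by
    intro r
    rw [Lb, card_filter_aux j w x hw (fun v => v.val < r + 2)]
    split_ifs <;> omega
  rw [gop]
  by_cases hx2 : 2 ≤ x.val
  · have hmn : x.val - 2 ≤ n := by have := x.isLt; omega
    have hA : 2 ^ 2 ^ (x.val - 2) ≤ 2 ^ 2 ^ n :=
      Nat.pow_le_pow_right (by norm_num : (0:ℕ) < 2)
        (Nat.pow_le_pow_right (by norm_num : (0:ℕ) < 2) hmn)
    have hm : x.val - 2 ∈ FsetB n w := by
      rw [FsetB, Finset.mem_filter, Finset.mem_range]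
      refine ⟨by omega, ?_⟩
      rw [hL (x.val - 2), hL (x.val - 2 + 1)]
      rw [if_neg (by omega : ¬ (x.val < x.val - 2 + 2)),
          if_pos (by omega : x.val < x.val - 2 + 1 + 2)]
      split_ifs <;> omega
    have hub : ∀ r ∈ FsetB n w, r ≤ x.val - 2 := by
      intro r hr
      by_contra hlt
      rw [FsetB, Finset.mem_filter, Finset.mem_range] at hr
      obtain ⟨hrn, hcond⟩ := hr
      have hge : 2 ^ 2 ^ n ≤ Lb n w r := by
        rw [hL r]; rw [if_pos (by omega : x.val < r + 2)]; split_ifs <;> omega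
      have hle : Lb n w (r + 1) ≤ 1 + 2 ^ 2 ^ n := by
        rw [hL (r + 1)]; split_ifs <;> omega
      have hB : 2 ≤ 2 ^ 2 ^ r :=
        Nat.pow_le_pow_right (by norm_num : (0:ℕ) < 2) Nat.one_le_two_pow
      have key : 2 * 2 ^ 2 ^ n ≤ 2 ^ 2 ^ r * 2 ^ 2 ^ n :=
        Nat.mul_le_mul_right _ hB
      have key2 : 2 ^ 2 ^ r * 2 ^ 2 ^ n ≤ 2 ^ 2 ^ r * Lb n w r :=
        Nat.mul_le_mul_left _ hge
      omega
    have hne : (FsetB n w).Nonempty := ⟨x.val - 2, hm⟩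
    rw [dif_pos hne]
    have hmax : (FsetB n w).max' hne = x.val - 2 :=
      le_antisymm (Finset.max'_le _ _ _ hub) (Finset.le_max' _ _ hm)
    apply Fin.ext
    simp only [hmax]
    omega
  · have hne : ¬ (FsetB n w).Nonempty := by
      rintro ⟨r, hr⟩
      rw [FsetB, Finset.mem_filter, Finset.mem_range] at hr
      obtain ⟨hrn, hcond⟩ := hr
      have hge : 2 ^ 2 ^ n ≤ Lb n w r := by
        rw [hL r]; rw [if_pos (by omega : x.val < r + 2)]; split_ifs <;> omega
      have hle : Lb n w (r + 1) ≤ 1 + 2 ^ 2 ^ n := by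
        rw [hL (r + 1)]; split_ifs <;> omega
      have hB : 2 ≤ 2 ^ 2 ^ r :=
        Nat.pow_le_pow_right (by norm_num : (0:ℕ) < 2) Nat.one_le_two_pow
      have key : 2 * 2 ^ 2 ^ n ≤ 2 ^ 2 ^ r * 2 ^ 2 ^ n :=
        Nat.mul_le_mul_right _ hB
      have key2 : 2 ^ 2 ^ r * 2 ^ 2 ^ n ≤ 2 ^ 2 ^ r * Lb n w r :=
        Nat.mul_le_mul_left _ hge
      omega
    rw [dif_neg hne]
    rw [card_filter_aux j w x hw (fun v => v = 1),
        card_filter_aux j w x hw (fun v => v = 0)]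
    have hx01 : x = 0 ∨ x = 1 := by
      have : x.val = 0 ∨ x.val = 1 := by omega
      rcases this with h | h
      · left; exact Fin.ext h
      · right; exact Fin.ext h
    have h01 : (0 : Fin (n+3)) ≠ 1 := by
      intro h; have := Fin.val_eq_of_eq h; simp at this
    rcases hx01 with h | h <;> subst h
    · rw [if_neg h01, if_pos rfl]
      rw [if_neg (by split_ifs <;> omega)]
    · rw [if_pos rfl, if_neg h01.symm]
      rw [if_pos (by split_ifs <;> omega)]
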